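/- arXiv:2403.09276 — 3 statements merged into one kernel-verified Lean document; each statement's English description precedes it below -/
import Mathlib

section
/- Let R be an expanding edge replacement system and Gl_R its gluing automaton. Let x₀…x_{m+1} and y₀…y_{m+1} be words in E_R representing adjacent edges of the full expansion E_{m+1}, suppose that x₀…x_m ≠ y₀…y_m, and suppose that the word (x₀,y₀)…(x_m,y_m) is recognized by Gl_R. Then (x₀,y₀)…(x_{m+1},y_{m+1}) is recognized by Gl_R, its last transition is a Type 2 transition, and the final state q₁(c(x_{m+1}),α;c(y_{m+1}),β) records the adjacency type of x₀…x_{m+1} and y₀…y_{m+1} in E_{m+1} in the sense of the Type 1 rule. -/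
/-!
Formalization of edge replacement systems, their limit-space gluing relation,
and the gluing automaton, following Belk–Forrest and the paper
"Rationality of the gluing of edge replacement systems".
-/

namespace ERSPaper

/-- The five adjacency-type symbols `in`, `out`, `lp`, `db⁺`, `db⁻`. -/
inductive EType : Type
  | inn : EType
  | out : EType
  | lp : EType
  | dbp : EType
  | dbm : EType
  deriving DecidableEq

/-- An edge replacement system satisfying the loop-color assumption.
`V z` / `E z` are the vertices/edges of the base graph (`z = none`) or of the
replacement graph `Γ c` (`z = some c`).  For loop colors the two boundary
vertices coincide (the single boundary vertex `λ_c`); for non-loop colors they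
are distinct.  The field `loop_iff` is the loop-color assumption: an edge is a
loop if and only if its color is a loop color. -/
structure ERS : Type 1 where
  Col : Type
  [colFintype : Fintype Col]
  [colDecEq : DecidableEq Col]
  V : Option Col → Type
  E : Option Col → Type
  [vFintype : ∀ z, Fintype (V z)]
  [eFintype : ∀ z, Fintype (E z)]
  [vDecEq : ∀ z, DecidableEq (V z)]
  ini : ∀ z, E z → V z
  fin : ∀ z, E z → V z
  col : ∀ z, E z → Col
  loopCol : Col → Prop
  bIni : ∀ c : Col, V (some c)
  bFin : ∀ c : Col, V (some c)
  bd_eq_iff : ∀ c : Col, (bIni c = bFin c ↔ loopCol c)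
  loop_iff : ∀ z (e : E z), (ini z e = fin z e ↔ loopCol (col z e))

attribute [instance] ERS.colFintype ERS.colDecEq ERS.vFintype ERS.eFintype ERS.vDecEq

namespace ERS

/-- The alphabet `Σ`: the disjoint union of the edge sets of the base graph and
of all the replacement graphs. -/
def Alph (R : ERS) : Type := Σ z : Option R.Col, R.E z

/-- Membership in the symbol space `Ω_R`: infinite directed walks on the color
graph starting at `q(0)`, i.e. `x₀` is an edge of the base graph and `x_{l+1}`
is an edge of `Γ_{c(x_l)}`. -/
def IsWalk (R : ERS) (x : ℕ → R.Alph) : Prop :=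
  (x 0).1 = none ∧ ∀ l : ℕ, (x (l + 1)).1 = some (R.col (x l).1 (x l).2)

/-- The finite word `x₀ … x_m` belongs to `E_R`. -/
def IsWalkUpTo (R : ERS) (x : ℕ → R.Alph) (m : ℕ) : Prop :=
  (x 0).1 = none ∧ ∀ l : ℕ, l < m → (x (l + 1)).1 = some (R.col (x l).1 (x l).2)

theorem IsWalk.upTo {R : ERS} {x : ℕ → R.Alph} (hx : R.IsWalk x) (m : ℕ) :
    R.IsWalkUpTo x m :=
  ⟨hx.1, fun l _ => hx.2 l⟩

end ERS

/-- A finite graph whose edges are colored by the colors of `R`. -/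
structure GraphData (R : ERS) : Type 1 where
  V : Type
  E : Type
  ι : E → V
  τ : E → V
  col : E → R.Col

/-- An edge is incident on a vertex. -/
def GraphData.IncidentOn {R : ERS} (G : GraphData R) (e : G.E) (v : G.V) : Prop :=
  G.ι e = v ∨ G.τ e = v

/-- Two edges are incident on a common vertex. -/
def GraphData.Adjacent {R : ERS} (G : GraphData R) (e f : G.E) : Prop :=
  ∃ v : G.V, G.IncidentOn e v ∧ G.IncidentOn f v

namespace ERS

/-- When expanding the edge `e`, a vertex `v` of the replacement graph
`Γ_{c(e)}` is attached: boundary vertices go to the endpoints of `e`,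
interior vertices give fresh vertices. -/
def attach (R : ERS) (G : GraphData R) (e : G.E) (v : R.V (some (G.col e))) :
    G.V ⊕ (Σ e : G.E,
      {v : R.V (some (G.col e)) // v ≠ R.bIni (G.col e) ∧ v ≠ R.bFin (G.col e)}) :=
  if h1 : v = R.bIni (G.col e) then Sum.inl (G.ι e)
  else if h2 : v = R.bFin (G.col e) then Sum.inl (G.τ e)
  else Sum.inr ⟨e, v, h1, h2⟩

/-- The simultaneous expansion of every edge of `G`. -/
def expandG (R : ERS) (G : GraphData R) : GraphData R where
  V := G.V ⊕ (Σ e : G.E,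
    {v : R.V (some (G.col e)) // v ≠ R.bIni (G.col e) ∧ v ≠ R.bFin (G.col e)})
  E := Σ e : G.E, R.E (some (G.col e))
  ι := fun p => R.attach G p.1 (R.ini (some (G.col p.1)) p.2)
  τ := fun p => R.attach G p.1 (R.fin (some (G.col p.1)) p.2)
  col := fun p => R.col (some (G.col p.1)) p.2

/-- The base graph, as graph data. -/
def base (R : ERS) : GraphData R :=
  ⟨R.V none, R.E none, R.ini none, R.fin none, R.col none⟩

/-- The full expansion sequence `E_m`. -/
def fullExp (R : ERS) : ℕ → GraphData R
  | 0 => R.base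
  | m + 1 => R.expandG (R.fullExp m)

theorem col_cast (R : ERS) (p : R.Alph) (z : Option R.Col) (h : p.1 = z) :
    R.col z (cast (congrArg R.E h) p.2) = R.col p.1 p.2 := by
  rcases p with ⟨w, e⟩
  cases h
  rfl

/-- The edge of the full expansion `E_m` labeled by the word `x₀ … x_m`,
together with the fact that its color is the color of its last letter. -/
def wordEdge (R : ERS) (x : ℕ → R.Alph) :
    (m : ℕ) → R.IsWalkUpTo x m →
      {e : (R.fullExp m).E // (R.fullExp m).col e = R.col (x m).1 (x m).2}
  | 0, hx => ⟨cast (congrArg R.E hx.1) (x 0).2, R.col_cast (x 0) none hx.1⟩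
  | m + 1, hx =>
    let prev := R.wordEdge x m ⟨hx.1, fun l hl => hx.2 l (Nat.lt_succ_of_lt hl)⟩
    let h : (x (m + 1)).1 = some ((R.fullExp m).col prev.1) :=
      (hx.2 m (Nat.lt_succ_self m)).trans (congrArg some prev.2.symm)
    ⟨⟨prev.1, cast (congrArg R.E h) (x (m + 1)).2⟩, R.col_cast (x (m + 1)) _ h⟩

/-- The gluing relation: two elements of `Ω_R` are glued when, for every large
enough `n`, their length-`(n+1)` prefixes are incident on a common vertex of
the full expansion `E_n`. -/
def Glued (R : ERS) (x y : ℕ → R.Alph) (hx : R.IsWalk x) (hy : R.IsWalk y) : Prop :=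
  ∃ N : ℕ, ∀ n : ℕ, N ≤ n →
    (R.fullExp n).Adjacent (R.wordEdge x n (hx.upTo n)).1 (R.wordEdge y n (hy.upTo n)).1

/-- The expanding condition on a replacement system (formulated after the
identification of the boundary vertices for loop colors). -/
structure Expanding (R : ERS) : Prop where
  no_isolated : ∀ z (v : R.V z), ∃ e : R.E z, R.ini z e = v ∨ R.fin z e = v
  no_bd_edge : ∀ c : R.Col, ¬ R.loopCol c → ∀ e : R.E (some c),
    ¬ ((R.ini (some c) e = R.bIni c ∧ R.fin (some c) e = R.bFin c) ∨
       (R.ini (some c) e = R.bFin c ∧ R.fin (some c) e = R.bIni c))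
  two_edges : ∀ c : R.Col, 2 ≤ Fintype.card (R.E (some c))
  interior : ∀ c : R.Col, ∃ v : R.V (some c), v ≠ R.bIni c ∧ v ≠ R.bFin c

end ERS

/-- `EndAt ι τ v α` : the edge with initial vertex `ι` and terminal vertex `τ`
is incident on `v`, in the fashion recorded by `α`: incoming (`in`), outgoing
(`out`) or a loop (`lp`). -/
inductive EndAt {V : Type} : V → V → V → EType → Prop
  | inn {i v : V} : i ≠ v → EndAt i v v .inn
  | out {t v : V} : v ≠ t → EndAt v t v .out
  | lp {v : V} : EndAt v v v .lp

/-- Two non-loop edges (given by their endpoints) are parallel. -/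
def Parallel {V : Type} (ia ta ib tb : V) : Prop :=
  ia ≠ ta ∧ ((ia = ib ∧ ta = tb) ∨ (ia = tb ∧ ta = ib))

/-- The Type 1 adjacency-type rule for two distinct adjacent edges, given by
their endpoints: parallel non-loops give the `db` types (same or opposite
orientation), and otherwise the unique common vertex `v` determines the types
via `EndAt`. -/
inductive AdjType {V : Type} : V → V → V → V → EType → EType → Prop
  | dbSame {u v : V} : u ≠ v → AdjType u v u v .dbp .dbp
  | dbOpp {u v : V} : u ≠ v → AdjType u v v u .dbp .dbm
  | single {ia ta ib tb v : V} {α β : EType} :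
      ¬ Parallel ia ta ib tb → EndAt ia ta v α → EndAt ib tb v β →
      AdjType ia ta ib tb α β

/-- The states of the gluing automaton `Gl_R`. -/
inductive GlState (R : ERS) : Type
  | q0 : Option R.Col → GlState R
  | q1 : R.Col → EType → R.Col → EType → GlState R

/-- Membership in `Q₀`. -/
def GlState.inQ0 {R : ERS} : GlState R → Prop
  | .q0 _ => True
  | _ => False

/-- Membership in `Q₁`. -/
def GlState.inQ1 {R : ERS} : GlState R → Prop
  | .q1 _ _ _ _ => True
  | _ => False

/-- The defining conditions for states of `Q₁`: `γ ≠ db⁻` and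
(`δ ∈ {db⁺, db⁻}` iff `γ = db⁺`). -/
def GlState.Valid {R : ERS} : GlState R → Prop
  | .q0 _ => True
  | .q1 _ γ _ δ => γ ≠ .dbm ∧ ((δ = .dbp ∨ δ = .dbm) ↔ γ = .dbp)

/-- The tracked boundary vertex of `Γ_c` for a non-`db` symbol:
`τ_c` for `in`, `ι_c` for `out`, and `λ_c` (the identified boundary vertex)
for `lp`. -/
def trackedV (R : ERS) (c : R.Col) : EType → Set (R.V (some c))
  | .inn => {R.bFin c}
  | .out => {R.bIni c}
  | .lp => {R.bIni c}
  | _ => ∅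

/-- The pairs of tracked vertices of a state `q₁(i,γ;j,δ)`. -/
inductive TrackedPair (R : ERS) (i j : R.Col) :
    EType → EType → R.V (some i) → R.V (some j) → Prop
  | nondb {γ δ : EType} {u : R.V (some i)} {w : R.V (some j)} :
      u ∈ trackedV R i γ → w ∈ trackedV R j δ → TrackedPair R i j γ δ u w
  | dbppIni : TrackedPair R i j .dbp .dbp (R.bIni i) (R.bIni j)
  | dbppFin : TrackedPair R i j .dbp .dbp (R.bFin i) (R.bFin j)
  | dbpmIni : TrackedPair R i j .dbp .dbm (R.bIni i) (R.bFin j)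
  | dbpmFin : TrackedPair R i j .dbp .dbm (R.bFin i) (R.bIni j)

/-- The transitions of the gluing automaton `Gl_R`. -/
inductive GlTrans (R : ERS) : GlState R → R.Alph × R.Alph → GlState R → Prop
  | type0 (z : Option R.Col) (e : R.E z) :
      GlTrans R (.q0 z) (⟨z, e⟩, ⟨z, e⟩) (.q0 (some (R.col z e)))
  | type1 (z : Option R.Col) (a b : R.E z) (hab : a ≠ b) {α β : EType}
      (h : AdjType (R.ini z a) (R.fin z a) (R.ini z b) (R.fin z b) α β) :
      GlTrans R (.q0 z) (⟨z, a⟩, ⟨z, b⟩) (.q1 (R.col z a) α (R.col z b) β)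
  | type2 (i j : R.Col) (γ δ : EType) (a : R.E (some i)) (b : R.E (some j))
      {u : R.V (some i)} {w : R.V (some j)}
      (hp : TrackedPair R i j γ δ u w) {α β : EType}
      (ha : EndAt (R.ini (some i) a) (R.fin (some i) a) u α)
      (hb : EndAt (R.ini (some j) b) (R.fin (some j) b) w β) :
      GlTrans R (.q1 i γ j δ) (⟨some i, a⟩, ⟨some j, b⟩)
        (.q1 (R.col (some i) a) α (R.col (some j) b) β)

/-- Infinite runs of `Gl_R` from the initial state `q₀(0)`. -/
def GlRun (R : ERS) (w : ℕ → R.Alph × R.Alph) (q : ℕ → GlState R) : Prop :=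
  q 0 = .q0 none ∧ ∀ l : ℕ, GlTrans R (q l) (w l) (q (l + 1))

/-- `Gl_R` recognizes the infinite sequence `w`. -/
def GlAccepts (R : ERS) (w : ℕ → R.Alph × R.Alph) : Prop :=
  ∃ q : ℕ → GlState R, GlRun R w q

/-- Finite runs of `Gl_R` processing the letters `w 0, …, w m`. -/
def GlRunFin (R : ERS) (w : ℕ → R.Alph × R.Alph) (m : ℕ) (q : ℕ → GlState R) : Prop :=
  q 0 = .q0 none ∧ ∀ l : ℕ, l ≤ m → GlTrans R (q l) (w l) (q (l + 1))

/-- `Gl_R` recognizes the finite word `w 0, …, w m`. -/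
def GlAcceptsFin (R : ERS) (w : ℕ → R.Alph × R.Alph) (m : ℕ) : Prop :=
  ∃ q : ℕ → GlState R, GlRunFin R w m q

/-- The transitions of the full sub-automaton `T_R` induced by `Q₀`. -/
def TTrans (R : ERS) (s : GlState R) (p : R.Alph × R.Alph) (t : GlState R) : Prop :=
  GlTrans R s p t ∧ s.inQ0 ∧ t.inQ0

/-- Finite runs of `T_R` processing the letters `w 0, …, w m`. -/
def TRunFin (R : ERS) (w : ℕ → R.Alph × R.Alph) (m : ℕ) (q : ℕ → GlState R) : Prop :=
  q 0 = .q0 none ∧ ∀ l : ℕ, l ≤ m → TTrans R (q l) (w l) (q (l + 1))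

/-- `T_R` recognizes the finite word `w 0, …, w m`. -/
def TAcceptsFin (R : ERS) (w : ℕ → R.Alph × R.Alph) (m : ℕ) : Prop :=
  ∃ q : ℕ → GlState R, TRunFin R w m q

end ERSPaper

namespace ERSPaper

section Aux

variable {R : ERS}

lemma mem_trackedV {c : R.Col} {γ : EType} {u : R.V (some c)}
    (h : u ∈ trackedV R c γ) : u = R.bIni c ∨ u = R.bFin c := by
  cases γ <;> simp [trackedV] at h <;> tauto

lemma trackedPair_bd {i j : R.Col} {γ δ : EType} {u : R.V (some i)} {w : R.V (some j)}
    (h : TrackedPair R i j γ δ u w) :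
    (u = R.bIni i ∨ u = R.bFin i) ∧ (w = R.bIni j ∨ w = R.bFin j) := by
  cases h with
  | nondb hu hw => exact ⟨mem_trackedV hu, mem_trackedV hw⟩
  | dbppIni => exact ⟨Or.inl rfl, Or.inl rfl⟩
  | dbppFin => exact ⟨Or.inr rfl, Or.inr rfl⟩
  | dbpmIni => exact ⟨Or.inl rfl, Or.inr rfl⟩
  | dbpmFin => exact ⟨Or.inr rfl, Or.inl rfl⟩

lemma endAt_cases {V : Type} {i t v : V} {α : EType} (h : EndAt i t v α) :
    (α = .inn ∧ t = v ∧ i ≠ v) ∨ (α = .out ∧ i = v ∧ t ≠ v) ∨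
      (α = .lp ∧ i = v ∧ t = v) := by
  cases h with
  | inn h => exact Or.inl ⟨rfl, rfl, h⟩
  | out h => exact Or.inr (Or.inl ⟨rfl, rfl, fun ht => h ht.symm⟩)
  | lp => exact Or.inr (Or.inr ⟨rfl, rfl, rfl⟩)

lemma endAt_exists {V : Type} {i t v : V} (h : i = v ∨ t = v) :
    ∃ α, EndAt i t v α := by
  by_cases h1 : i = v
  · by_cases h2 : t = v
    · subst h1; subst h2; exact ⟨.lp, .lp⟩
    · subst h1; exact ⟨.out, .out (fun ht => h2 ht.symm)⟩
  · rcases h with h | h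
    · exact absurd h h1
    · subst h; exact ⟨.inn, .inn h1⟩

lemma endAt_map {V W : Type} {f : V → W} (hf : Function.Injective f)
    {i t v : V} {α : EType} (h : EndAt i t v α) :
    EndAt (f i) (f t) (f v) α := by
  cases h with
  | inn h => exact .inn (fun he => h (hf he))
  | out h => exact .out (fun he => h (hf he))
  | lp => exact .lp

lemma attach_inj {G : GraphData R}
    (hG : ∀ e, (G.ι e = G.τ e ↔ R.loopCol (G.col e))) (e : G.E) :
    Function.Injective (R.attach G e) := by
  intro v v' h
  have hb : G.ι e = G.τ e → R.bIni (G.col e) = R.bFin (G.col e) :=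
    fun hh => (R.bd_eq_iff _).2 ((hG e).1 hh)
  unfold ERS.attach at h
  split_ifs at h
  all_goals first
    | (subst_vars; rfl)
    | (have hl := Sum.inl.inj h; subst_vars;
       first | exact hb hl | exact (hb hl.symm).symm)
    | (exact Sum.noConfusion h)
    | (have h2 := Sum.inr.inj h; injection h2 with h3 h4;
       exact congrArg Subtype.val h4)

lemma fullExp_loop (R : ERS) : ∀ (m : ℕ) (e : (R.fullExp m).E),
    ((R.fullExp m).ι e = (R.fullExp m).τ e ↔ R.loopCol ((R.fullExp m).col e))
  | 0, e => R.loop_iff none e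
  | m + 1, ⟨e0, a⟩ => by
    show R.attach (R.fullExp m) e0 (R.ini _ a) = R.attach (R.fullExp m) e0 (R.fin _ a) ↔
      R.loopCol (R.col _ a)
    constructor
    · intro h
      exact (R.loop_iff _ a).1 (attach_inj (fullExp_loop R m) e0 h)
    · intro h
      rw [(R.loop_iff _ a).2 h]

lemma attach_eq_of_ne {G : GraphData R} {e e' : G.E} (hne : e ≠ e')
    {p : R.V (some (G.col e))} {r : R.V (some (G.col e'))}
    (h : R.attach G e p = R.attach G e' r) :
    ∃ v : G.V,
      ((p = R.bIni (G.col e) ∧ G.ι e = v) ∨ (p = R.bFin (G.col e) ∧ G.τ e = v)) ∧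
      ((r = R.bIni (G.col e') ∧ G.ι e' = v) ∨ (r = R.bFin (G.col e') ∧ G.τ e' = v)) := by
  unfold ERS.attach at h
  split_ifs at h
  all_goals first
    | (exact absurd (congrArg Sigma.fst (Sum.inr.inj h)) hne)
    | (exact Sum.noConfusion h)
    | (have hl := Sum.inl.inj h; subst_vars;
       exact ⟨_, by tauto, by tauto⟩)

lemma subB {i : R.Col} (hR : R.Expanding) {a : R.E (some i)} {u p : R.V (some i)}
    {α : EType} {u' : R.V (some (R.col (some i) a))}
    (ha : EndAt (R.ini (some i) a) (R.fin (some i) a) u α)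
    (hu : u = R.bIni i ∨ u = R.bFin i) (hp : p = R.bIni i ∨ p = R.bFin i)
    (hm : (u' = R.bIni (R.col (some i) a) ∧ R.ini (some i) a = p) ∨
          (u' = R.bFin (R.col (some i) a) ∧ R.fin (some i) a = p)) :
    u' ∈ trackedV R (R.col (some i) a) α := by
  by_cases hpu : p = u
  · subst hpu
    rcases endAt_cases ha with ⟨hα, h1, h2⟩ | ⟨hα, h1, h2⟩ | ⟨hα, h1, h2⟩ <;> subst hα
    · -- α = inn : fin a = p, ini a ≠ p
      rcases hm with ⟨hm1, hm2⟩ | ⟨hm1, hm2⟩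
      · exact absurd hm2 h2
      · simp [trackedV, hm1]
    · -- α = out : ini a = p, fin a ≠ p
      rcases hm with ⟨hm1, hm2⟩ | ⟨hm1, hm2⟩
      · simp [trackedV, hm1]
      · exact absurd hm2 h2
    · -- α = lp : ini a = p = fin a
      have hlc : R.loopCol (R.col (some i) a) := (R.loop_iff (some i) a).1 (h1.trans h2.symm)
      have hbb := (R.bd_eq_iff _).2 hlc
      rcases hm with ⟨hm1, hm2⟩ | ⟨hm1, hm2⟩
      · simp [trackedV, hm1]
      · simp [trackedV, hm1, hbb]
  · exfalso
    have hnl : ¬ R.loopCol i := by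
      intro hl
      have hbb := (R.bd_eq_iff i).2 hl
      rcases hp with hp | hp <;> rcases hu with hu | hu <;>
        exact hpu (by rw [hp, hu]; try rw [hbb])
    apply hR.no_bd_edge i hnl a
    rcases endAt_cases ha with ⟨hα, h1, h2⟩ | ⟨hα, h1, h2⟩ | ⟨hα, h1, h2⟩
    · -- fin a = u, ini a ≠ u; need ini a = p
      rcases hm with ⟨hm1, hm2⟩ | ⟨hm1, hm2⟩
      · rcases hp with hp | hp <;> rcases hu with hu | hu
        · exact absurd (hp.trans hu.symm) hpu
        · exact Or.inl ⟨hm2.trans hp, h1.trans hu⟩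
        · exact Or.inr ⟨hm2.trans hp, h1.trans hu⟩
        · exact absurd (hp.trans hu.symm) hpu
      · exact absurd (hm2.symm.trans h1) hpu
    · -- ini a = u, fin a ≠ u; need fin a = p
      rcases hm with ⟨hm1, hm2⟩ | ⟨hm1, hm2⟩
      · exact absurd (hm2.symm.trans h1) hpu
      · rcases hp with hp | hp <;> rcases hu with hu | hu
        · exact absurd (hp.trans hu.symm) hpu
        · exact Or.inr ⟨h1.trans hu, hm2.trans hp⟩
        · exact Or.inl ⟨h1.trans hu, hm2.trans hp⟩
        · exact absurd (hp.trans hu.symm) hpu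
    · -- ini a = u = fin a
      rcases hm with ⟨hm1, hm2⟩ | ⟨hm1, hm2⟩
      · exact absurd (hm2.symm.trans h1) hpu
      · exact absurd (hm2.symm.trans h2) hpu

lemma subC {W : Type} {ca cb : R.Col} {ia ta ib tb v : W} {α β : EType}
    {p : R.V (some ca)} {r : R.V (some cb)}
    (h : AdjType ia ta ib tb α β)
    (la : ia = ta ↔ R.loopCol ca) (lb : ib = tb ↔ R.loopCol cb)
    (hpa : (p = R.bIni ca ∧ ia = v) ∨ (p = R.bFin ca ∧ ta = v))
    (hrb : (r = R.bIni cb ∧ ib = v) ∨ (r = R.bFin cb ∧ tb = v)) :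
    TrackedPair R ca cb α β p r := by
  cases h with
  | dbSame hne =>
    rcases hpa with ⟨hp1, hv1⟩ | ⟨hp1, hv1⟩ <;> rcases hrb with ⟨hr1, hw1⟩ | ⟨hr1, hw1⟩
    · exact hp1 ▸ hr1 ▸ .dbppIni
    · exact absurd (hv1.trans hw1.symm) hne
    · exact absurd (hw1.trans hv1.symm) hne
    · exact hp1 ▸ hr1 ▸ .dbppFin
  | dbOpp hne =>
    rcases hpa with ⟨hp1, hv1⟩ | ⟨hp1, hv1⟩ <;> rcases hrb with ⟨hr1, hw1⟩ | ⟨hr1, hw1⟩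
    · exact absurd (hw1.trans hv1.symm) (fun hh => hne hh.symm)
    · exact hp1 ▸ hr1 ▸ .dbpmIni
    · exact hp1 ▸ hr1 ▸ .dbpmFin
    · exact absurd (hv1.trans hw1.symm) (fun hh => hne hh.symm)
  | single hnp hea heb =>
    rename_i v0
    by_cases hvv : v = v0
    · subst hvv
      apply TrackedPair.nondb
      · rcases endAt_cases hea with ⟨hα, h1, h2⟩ | ⟨hα, h1, h2⟩ | ⟨hα, h1, h2⟩ <;> subst hα
        · rcases hpa with ⟨hp1, hv1⟩ | ⟨hp1, hv1⟩
          · exact absurd hv1 h2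
          · simp [trackedV, hp1]
        · rcases hpa with ⟨hp1, hv1⟩ | ⟨hp1, hv1⟩
          · simp [trackedV, hp1]
          · exact absurd hv1 h2
        · have hbb := (R.bd_eq_iff ca).2 (la.1 (h1.trans h2.symm))
          rcases hpa with ⟨hp1, hv1⟩ | ⟨hp1, hv1⟩
          · simp [trackedV, hp1]
          · simp [trackedV, hp1, hbb]
      · rcases endAt_cases heb with ⟨hβ, h1, h2⟩ | ⟨hβ, h1, h2⟩ | ⟨hβ, h1, h2⟩ <;> subst hβ
        · rcases hrb with ⟨hr1, hw1⟩ | ⟨hr1, hw1⟩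
          · exact absurd hw1 h2
          · simp [trackedV, hr1]
        · rcases hrb with ⟨hr1, hw1⟩ | ⟨hr1, hw1⟩
          · simp [trackedV, hr1]
          · exact absurd hw1 h2
        · have hbb := (R.bd_eq_iff cb).2 (lb.1 (h1.trans h2.symm))
          rcases hrb with ⟨hr1, hw1⟩ | ⟨hr1, hw1⟩
          · simp [trackedV, hr1]
          · simp [trackedV, hr1, hbb]
    · exfalso
      apply hnp
      -- a is incident on both v and v0, v ≠ v0
      have hA : ia = v ∧ ta = v0 ∨ ia = v0 ∧ ta = v := by
        rcases endAt_cases hea with ⟨hα, h1, h2⟩ | ⟨hα, h1, h2⟩ | ⟨hα, h1, h2⟩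
        · rcases hpa with ⟨hp1, hv1⟩ | ⟨hp1, hv1⟩
          · exact Or.inl ⟨hv1, h1⟩
          · exact absurd (h1.symm.trans hv1).symm hvv
        · rcases hpa with ⟨hp1, hv1⟩ | ⟨hp1, hv1⟩
          · exact absurd (h1.symm.trans hv1).symm hvv
          · exact Or.inr ⟨h1, hv1⟩
        · rcases hpa with ⟨hp1, hv1⟩ | ⟨hp1, hv1⟩
          · exact absurd (h1.symm.trans hv1).symm hvv
          · exact absurd (h2.symm.trans hv1).symm hvv
      have hB : ib = v ∧ tb = v0 ∨ ib = v0 ∧ tb = v := by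
        rcases endAt_cases heb with ⟨hβ, h1, h2⟩ | ⟨hβ, h1, h2⟩ | ⟨hβ, h1, h2⟩
        · rcases hrb with ⟨hr1, hw1⟩ | ⟨hr1, hw1⟩
          · exact Or.inl ⟨hw1, h1⟩
          · exact absurd (h1.symm.trans hw1).symm hvv
        · rcases hrb with ⟨hr1, hw1⟩ | ⟨hr1, hw1⟩
          · exact absurd (h1.symm.trans hw1).symm hvv
          · exact Or.inr ⟨h1, hw1⟩
        · rcases hrb with ⟨hr1, hw1⟩ | ⟨hr1, hw1⟩
          · exact absurd (h1.symm.trans hw1).symm hvv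
          · exact absurd (h2.symm.trans hw1).symm hvv
      constructor
      · rcases hA with ⟨h1, h2⟩ | ⟨h1, h2⟩
        · exact fun he => hvv (h1.symm.trans (he.trans h2))
        · exact fun he => hvv (h2.symm.trans (he.symm.trans h1))
      · rcases hA with ⟨h1, h2⟩ | ⟨h1, h2⟩ <;> rcases hB with ⟨h3, h4⟩ | ⟨h3, h4⟩
        · exact Or.inl ⟨h1.trans h3.symm, h2.trans h4.symm⟩
        · exact Or.inr ⟨h1.trans h4.symm, h2.trans h3.symm⟩
        · exact Or.inr ⟨h1.trans h4.symm, h2.trans h3.symm⟩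
        · exact Or.inl ⟨h1.trans h3.symm, h2.trans h4.symm⟩

lemma branch1 (hR : R.Expanding) (G : GraphData R)
    (ex ey : G.E) (hne : ex ≠ ey)
    (a : R.E (some (G.col ex))) (b : R.E (some (G.col ey)))
    {γ δ α β : EType} {u : R.V (some (G.col ex))} {w : R.V (some (G.col ey))}
    (hp : TrackedPair R (G.col ex) (G.col ey) γ δ u w)
    (ha : EndAt (R.ini _ a) (R.fin _ a) u α)
    (hb : EndAt (R.ini _ b) (R.fin _ b) w β)
    (p : R.V (some ((R.expandG G).col ⟨ex, a⟩)))
    (r : R.V (some ((R.expandG G).col ⟨ey, b⟩)))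
    (h : R.attach (R.expandG G) ⟨ex, a⟩ p = R.attach (R.expandG G) ⟨ey, b⟩ r) :
    TrackedPair R _ _ α β p r := by
  have hne' : (⟨ex, a⟩ : (R.expandG G).E) ≠ ⟨ey, b⟩ :=
    fun hh => hne (congrArg Sigma.fst hh)
  obtain ⟨v', hpp, hrr⟩ := attach_eq_of_ne hne' h
  have hu := (trackedPair_bd hp).1
  have hw := (trackedPair_bd hp).2
  rcases hpp with ⟨hp1, hv1⟩ | ⟨hp1, hv1⟩ <;> rcases hrr with ⟨hr1, hw1⟩ | ⟨hr1, hw1⟩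
  · obtain ⟨v0, hba, hbb⟩ := attach_eq_of_ne hne
      (show R.attach G ex (R.ini _ a) = R.attach G ey (R.ini _ b) from hv1.trans hw1.symm)
    exact TrackedPair.nondb
      (subB hR ha hu (hba.imp And.left And.left) (Or.inl ⟨hp1, rfl⟩))
      (subB hR hb hw (hbb.imp And.left And.left) (Or.inl ⟨hr1, rfl⟩))
  · obtain ⟨v0, hba, hbb⟩ := attach_eq_of_ne hne
      (show R.attach G ex (R.ini _ a) = R.attach G ey (R.fin _ b) from hv1.trans hw1.symm)
    exact TrackedPair.nondb
      (subB hR ha hu (hba.imp And.left And.left) (Or.inl ⟨hp1, rfl⟩))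
      (subB hR hb hw (hbb.imp And.left And.left) (Or.inr ⟨hr1, rfl⟩))
  · obtain ⟨v0, hba, hbb⟩ := attach_eq_of_ne hne
      (show R.attach G ex (R.fin _ a) = R.attach G ey (R.ini _ b) from hv1.trans hw1.symm)
    exact TrackedPair.nondb
      (subB hR ha hu (hba.imp And.left And.left) (Or.inr ⟨hp1, rfl⟩))
      (subB hR hb hw (hbb.imp And.left And.left) (Or.inl ⟨hr1, rfl⟩))
  · obtain ⟨v0, hba, hbb⟩ := attach_eq_of_ne hne
      (show R.attach G ex (R.fin _ a) = R.attach G ey (R.fin _ b) from hv1.trans hw1.symm)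
    exact TrackedPair.nondb
      (subB hR ha hu (hba.imp And.left And.left) (Or.inr ⟨hp1, rfl⟩))
      (subB hR hb hw (hbb.imp And.left And.left) (Or.inr ⟨hr1, rfl⟩))

lemma branch2 (hR : R.Expanding) (G : GraphData R)
    (hG : ∀ e, (G.ι e = G.τ e ↔ R.loopCol (G.col e)))
    (e : G.E) (a b : R.E (some (G.col e))) (hab : a ≠ b) {α β : EType}
    (h : AdjType (R.ini _ a) (R.fin _ a) (R.ini _ b) (R.fin _ b) α β)
    (p : R.V (some ((R.expandG G).col ⟨e, a⟩)))
    (r : R.V (some ((R.expandG G).col ⟨e, b⟩)))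
    (hat : R.attach (R.expandG G) ⟨e, a⟩ p = R.attach (R.expandG G) ⟨e, b⟩ r) :
    TrackedPair R _ _ α β p r := by
  have hne' : (⟨e, a⟩ : (R.expandG G).E) ≠ ⟨e, b⟩ := by
    intro hh
    injection hh with h1 h2
    exact hab h2
  obtain ⟨v', hpp, hrr⟩ := attach_eq_of_ne hne' hat
  rcases hpp with ⟨hp1, hv1⟩ | ⟨hp1, hv1⟩ <;> rcases hrr with ⟨hr1, hw1⟩ | ⟨hr1, hw1⟩
  · have hcom : R.ini _ a = R.ini _ b := attach_inj hG e (hv1.trans hw1.symm)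
    exact subC h (R.loop_iff _ a) (R.loop_iff _ b) (Or.inl ⟨hp1, hcom⟩) (Or.inl ⟨hr1, rfl⟩)
  · have hcom : R.ini _ a = R.fin _ b := attach_inj hG e (hv1.trans hw1.symm)
    exact subC h (R.loop_iff _ a) (R.loop_iff _ b) (Or.inl ⟨hp1, hcom⟩) (Or.inr ⟨hr1, rfl⟩)
  · have hcom : R.fin _ a = R.ini _ b := attach_inj hG e (hv1.trans hw1.symm)
    exact subC h (R.loop_iff _ a) (R.loop_iff _ b) (Or.inr ⟨hp1, hcom⟩) (Or.inl ⟨hr1, rfl⟩)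
  · have hcom : R.fin _ a = R.fin _ b := attach_inj hG e (hv1.trans hw1.symm)
    exact subC h (R.loop_iff _ a) (R.loop_iff _ b) (Or.inr ⟨hp1, hcom⟩) (Or.inr ⟨hr1, rfl⟩)

lemma wordEdge_congr {x y : ℕ → R.Alph} : ∀ (m : ℕ) (hx : R.IsWalkUpTo x m)
    (hy : R.IsWalkUpTo y m), (∀ l, l ≤ m → x l = y l) →
    (R.wordEdge x m hx).1 = (R.wordEdge y m hy).1
  | 0, hx, hy, hxy => by
    apply eq_of_heq
    refine (cast_heq _ _).trans (HEq.trans ?_ (cast_heq _ _).symm)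
    rw [hxy 0 (Nat.zero_le _)]
  | m + 1, hx, hy, hxy => by
    have ih := wordEdge_congr m ⟨hx.1, fun l hl => hx.2 l (Nat.lt_succ_of_lt hl)⟩
      ⟨hy.1, fun l hl => hy.2 l (Nat.lt_succ_of_lt hl)⟩
      (fun l hl => hxy l (le_trans hl (Nat.le_succ m)))
    refine Sigma.ext ih ?_
    show HEq (cast _ (x (m + 1)).2) (cast _ (y (m + 1)).2)
    refine (cast_heq _ _).trans (HEq.trans ?_ (cast_heq _ _).symm)
    rw [hxy (m + 1) le_rfl]

lemma run_q0 {x y : ℕ → R.Alph} {m : ℕ} {q : ℕ → GlState R}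
    (hq : GlRunFin R (fun n => (x n, y n)) m q)
    (heq : ∀ l, l ≤ m → x l = y l) :
    ∀ l, l ≤ m + 1 → ∃ z, q l = .q0 z := by
  intro l
  induction l with
  | zero => exact fun _ => ⟨none, hq.1⟩
  | succ l ih =>
    intro hl
    obtain ⟨z, hz⟩ := ih (le_trans (Nat.le_succ l) hl)
    have ht := hq.2 l (Nat.lt_succ_iff.mp hl)
    rw [hz] at ht
    have hxl := heq l (Nat.lt_succ_iff.mp hl)
    simp only at ht
    generalize hA : x l = ax at ht hxl
    generalize hB : y l = ay at ht hxl
    subst hxl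
    generalize hC : q (l + 1) = ql at ht ⊢
    cases ht with
    | type0 => exact ⟨_, rfl⟩
    | type1 z a b hab h => exact absurd rfl hab

lemma glTrans_q0_inv {z : Option R.Col} {L : R.Alph × R.Alph} {T : GlState R}
    (h : GlTrans R (.q0 z) L T) :
    (∃ e : R.E z, L = (⟨z, e⟩, ⟨z, e⟩) ∧ T = .q0 (some (R.col z e))) ∨
    (∃ a b : R.E z, a ≠ b ∧ ∃ α β : EType,
      L = (⟨z, a⟩, ⟨z, b⟩) ∧
      AdjType (R.ini z a) (R.fin z a) (R.ini z b) (R.fin z b) α β ∧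
      T = .q1 (R.col z a) α (R.col z b) β) := by
  cases h with
  | type0 z e => exact Or.inl ⟨e, rfl, rfl⟩
  | type1 z a b hab hAdj => exact Or.inr ⟨a, b, hab, _, _, rfl, hAdj, rfl⟩

lemma glTrans_q1_inv {i j : R.Col} {γ δ : EType} {L : R.Alph × R.Alph} {T : GlState R}
    (h : GlTrans R (.q1 i γ j δ) L T) :
    ∃ (a : R.E (some i)) (b : R.E (some j)) (u : R.V (some i)) (w : R.V (some j))
      (α β : EType),
      TrackedPair R i j γ δ u w ∧
      EndAt (R.ini (some i) a) (R.fin (some i) a) u α ∧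
      EndAt (R.ini (some j) b) (R.fin (some j) b) w β ∧
      L = (⟨some i, a⟩, ⟨some j, b⟩) ∧
      T = .q1 (R.col (some i) a) α (R.col (some j) b) β := by
  cases h with
  | type2 i j γ δ a b hp ha hb => exact ⟨a, b, _, _, _, _, hp, ha, hb, rfl, rfl⟩

lemma key (hR : R.Expanding) (x y : ℕ → R.Alph) :
    ∀ (m : ℕ) (hx : R.IsWalkUpTo x m) (hy : R.IsWalkUpTo y m) (q : ℕ → GlState R),
      GlRunFin R (fun n => (x n, y n)) m q → (∃ l, l ≤ m ∧ x l ≠ y l) →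
      (R.wordEdge x m hx).1 ≠ (R.wordEdge y m hy).1 ∧
      ∃ γ δ : EType,
        q (m + 1) = .q1 ((R.fullExp m).col (R.wordEdge x m hx).1) γ
                        ((R.fullExp m).col (R.wordEdge y m hy).1) δ ∧
        ∀ (p : R.V (some ((R.fullExp m).col (R.wordEdge x m hx).1)))
          (r : R.V (some ((R.fullExp m).col (R.wordEdge y m hy).1))),
          R.attach (R.fullExp m) (R.wordEdge x m hx).1 p =
            R.attach (R.fullExp m) (R.wordEdge y m hy).1 r →
          TrackedPair R _ _ γ δ p r := by
  intro m
  induction m with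
  | zero =>
    intro hx hy q hq hne
    have hne0 : x 0 ≠ y 0 := by
      obtain ⟨l, hl, h⟩ := hne
      rwa [Nat.le_zero.mp hl] at h
    have ht := hq.2 0 le_rfl
    rw [hq.1] at ht
    rcases glTrans_q0_inv ht with ⟨e, hL, hT⟩ | ⟨a, b, hab, α, β, hL, hAdj, hT⟩
    · exact absurd ((congrArg Prod.fst hL).trans (congrArg Prod.snd hL).symm) hne0
    · have hA : x 0 = ⟨none, a⟩ := congrArg Prod.fst hL
      have hB : y 0 = ⟨none, b⟩ := congrArg Prod.snd hL
      have hex : (R.wordEdge x 0 hx).1 = a := by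
        apply eq_of_heq
        refine (cast_heq _ _).trans ?_
        rw [hA]
        exact HEq.rfl
      have hey : (R.wordEdge y 0 hy).1 = b := by
        apply eq_of_heq
        refine (cast_heq _ _).trans ?_
        rw [hB]
        exact HEq.rfl
      generalize hgx : (R.wordEdge x 0 hx).1 = EX
      generalize hgy : (R.wordEdge y 0 hy).1 = EY
      have hex2 : EX = a := hgx ▸ hex
      have hey2 : EY = b := hgy ▸ hey
      subst hex2; subst hey2
      refine ⟨hab, α, β, hT, ?_⟩
      intro p r hat
      obtain ⟨v0, hpp, hrr⟩ := attach_eq_of_ne hab hat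
      exact subC hAdj (R.loop_iff none EX) (R.loop_iff none EY) hpp hrr
  | succ m IH =>
    intro hx hy q hq hne
    have hx' : R.IsWalkUpTo x m := ⟨hx.1, fun l hl => hx.2 l (Nat.lt_succ_of_lt hl)⟩
    have hy' : R.IsWalkUpTo y m := ⟨hy.1, fun l hl => hy.2 l (Nat.lt_succ_of_lt hl)⟩
    have hq' : GlRunFin R (fun n => (x n, y n)) m q :=
      ⟨hq.1, fun l hl => hq.2 l (le_trans hl (Nat.le_succ m))⟩
    by_cases hprev : ∃ l, l ≤ m ∧ x l ≠ y l
    · obtain ⟨hneE, γ, δ, hstate, -⟩ := IH hx' hy' q hq' hprev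
      have ht := hq.2 (m + 1) le_rfl
      rw [hstate] at ht
      obtain ⟨a, b, u, w, α, β, hp, ha, hb, hL, hT⟩ := glTrans_q1_inv ht
      have hA : x (m + 1) = ⟨_, a⟩ := congrArg Prod.fst hL
      have hB : y (m + 1) = ⟨_, b⟩ := congrArg Prod.snd hL
      have hEXeq : (R.wordEdge x (m + 1) hx).1 = ⟨(R.wordEdge x m hx').1, a⟩ := by
        refine Sigma.ext rfl ?_
        show HEq (cast _ (x (m + 1)).2) a
        refine (cast_heq _ _).trans ?_
        rw [hA]
      have hEYeq : (R.wordEdge y (m + 1) hy).1 = ⟨(R.wordEdge y m hy').1, b⟩ := by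
        refine Sigma.ext rfl ?_
        show HEq (cast _ (y (m + 1)).2) b
        refine (cast_heq _ _).trans ?_
        rw [hB]
      generalize hgx : (R.wordEdge x (m + 1) hx).1 = EX
      generalize hgy : (R.wordEdge y (m + 1) hy).1 = EY
      have hex2 : EX = ⟨(R.wordEdge x m hx').1, a⟩ := hgx ▸ hEXeq
      have hey2 : EY = ⟨(R.wordEdge y m hy').1, b⟩ := hgy ▸ hEYeq
      subst hex2; subst hey2
      refine ⟨fun hh => hneE (congrArg Sigma.fst hh), α, β, hT, ?_⟩
      intro p r hat
      exact branch1 hR (R.fullExp m) _ _ hneE a b hp ha hb p r hat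
    · have heqq : ∀ l, l ≤ m → x l = y l := by
        intro l hl
        by_contra hc
        exact hprev ⟨l, hl, hc⟩
      have hxyne : x (m + 1) ≠ y (m + 1) := by
        obtain ⟨l0, hl0, hne0⟩ := hne
        rcases Nat.lt_succ_iff_lt_or_eq.mp (Nat.lt_succ_of_le hl0) with h | h
        · exact absurd (heqq l0 (Nat.lt_succ_iff.mp h)) hne0
        · rwa [h] at hne0
      obtain ⟨z, hz⟩ := run_q0 hq' heqq (m + 1) le_rfl
      have ht := hq.2 (m + 1) le_rfl
      rw [hz] at ht
      rcases glTrans_q0_inv ht with ⟨e, hL, hT⟩ | ⟨a, b, hab, α, β, hL, hAdj, hT⟩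
      · exact absurd ((congrArg Prod.fst hL).trans (congrArg Prod.snd hL).symm) hxyne
      · have hA : x (m + 1) = ⟨z, a⟩ := congrArg Prod.fst hL
        have hB : y (m + 1) = ⟨z, b⟩ := congrArg Prod.snd hL
        have hz2 : z = some ((R.fullExp m).col (R.wordEdge x m hx').1) := by
          rw [(R.wordEdge x m hx').2, ← hx.2 m (Nat.lt_succ_self m), hA]
        subst hz2
        have hEYE : (R.wordEdge y m hy').1 = (R.wordEdge x m hx').1 :=
          wordEdge_congr m hy' hx' (fun l hl => (heqq l hl).symm)
        have hEXeq : (R.wordEdge x (m + 1) hx).1 = ⟨(R.wordEdge x m hx').1, a⟩ := by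
          refine Sigma.ext rfl ?_
          show HEq (cast _ (x (m + 1)).2) a
          refine (cast_heq _ _).trans ?_
          rw [hA]
        have hEYeq : (R.wordEdge y (m + 1) hy).1 = ⟨(R.wordEdge x m hx').1, b⟩ := by
          refine Sigma.ext hEYE ?_
          show HEq (cast _ (y (m + 1)).2) b
          refine (cast_heq _ _).trans ?_
          rw [hB]
        generalize hgx : (R.wordEdge x (m + 1) hx).1 = EX
        generalize hgy : (R.wordEdge y (m + 1) hy).1 = EY
        have hex2 : EX = ⟨(R.wordEdge x m hx').1, a⟩ := hgx ▸ hEXeq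
        have hey2 : EY = ⟨(R.wordEdge x m hx').1, b⟩ := hgy ▸ hEYeq
        subst hex2; subst hey2
        refine ⟨?_, α, β, hT, ?_⟩
        · intro hh
          injection hh with h1 h2
          exact hab h2
        · intro p r hat
          exact branch2 hR (R.fullExp m) (fullExp_loop R m) _ a b hab hAdj p r hat

end Aux

end ERSPaper

namespace ERSPaper

/-- adjacency implies a Type 2 transition.  Let `x₀…x_{m+1}`
and `y₀…y_{m+1}` be words of `E_R` representing adjacent edges of the full
expansion `E_{m+1}`, with `x₀…x_m ≠ y₀…y_m`, and suppose the word
`(x₀,y₀)…(x_m,y_m)` is recognized by `Gl_R`.  Then `(x₀,y₀)…(x_{m+1},y_{m+1})`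
is recognized by `Gl_R`, the last transition of the run is a Type 2 transition
(its source lies in `Q₁`), and the final state `q₁(c(x_{m+1}),α;c(y_{m+1}),β)`
records the adjacency type of `x₀…x_{m+1}` and `y₀…y_{m+1}` in `E_{m+1}` in
the sense of the Type 1 rule. -/
theorem adjacency_implies_type2_transition (R : ERS) (hR : R.Expanding)
    (x y : ℕ → R.Alph) (m : ℕ)
    (hx : R.IsWalkUpTo x (m + 1)) (hy : R.IsWalkUpTo y (m + 1))
    (hne : ∃ l ≤ m, x l ≠ y l)
    (hadj : (R.fullExp (m + 1)).Adjacent (R.wordEdge x (m + 1) hx).1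
      (R.wordEdge y (m + 1) hy).1)
    (hrec : GlAcceptsFin R (fun n => (x n, y n)) m) :
    ∃ q : ℕ → GlState R,
      GlRunFin R (fun n => (x n, y n)) (m + 1) q ∧
      (q (m + 1)).inQ1 ∧
      ∃ α β : EType,
        q (m + 2) =
          .q1 (R.col (x (m + 1)).1 (x (m + 1)).2) α
              (R.col (y (m + 1)).1 (y (m + 1)).2) β ∧
        AdjType ((R.fullExp (m + 1)).ι (R.wordEdge x (m + 1) hx).1)
                ((R.fullExp (m + 1)).τ (R.wordEdge x (m + 1) hx).1)
                ((R.fullExp (m + 1)).ι (R.wordEdge y (m + 1) hy).1)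
                ((R.fullExp (m + 1)).τ (R.wordEdge y (m + 1) hy).1) α β := by
  classical
  obtain ⟨q, hq⟩ := hrec
  have hx' : R.IsWalkUpTo x m := ⟨hx.1, fun l hl => hx.2 l (Nat.lt_succ_of_lt hl)⟩
  have hy' : R.IsWalkUpTo y m := ⟨hy.1, fun l hl => hy.2 l (Nat.lt_succ_of_lt hl)⟩
  obtain ⟨hneE, γ, δ, hstate, inv⟩ := key hR x y m hx' hy' q hq hne
  set G := R.fullExp m with hG
  set ex := (R.wordEdge x m hx').1 with hex
  set ey := (R.wordEdge y m hy').1 with heyd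
  have h1 : (x (m + 1)).1 = some (G.col ex) :=
    (hx.2 m (Nat.lt_succ_self m)).trans (congrArg some (R.wordEdge x m hx').2.symm)
  have h2 : (y (m + 1)).1 = some (G.col ey) :=
    (hy.2 m (Nat.lt_succ_self m)).trans (congrArg some (R.wordEdge y m hy').2.symm)
  set ac : R.E (some (G.col ex)) := cast (congrArg R.E h1) (x (m + 1)).2 with hac
  set bc : R.E (some (G.col ey)) := cast (congrArg R.E h2) (y (m + 1)).2 with hbc
  have hEX : (R.wordEdge x (m + 1) hx).1 = ⟨ex, ac⟩ := rfl
  have hEY : (R.wordEdge y (m + 1) hy).1 = ⟨ey, bc⟩ := rfl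
  obtain ⟨v, hxv, hyv⟩ := hadj
  rw [hEX] at hxv
  rw [hEY] at hyv
  obtain ⟨pa, hpaend, hva⟩ : ∃ pa, (R.ini _ ac = pa ∨ R.fin _ ac = pa) ∧
      R.attach G ex pa = v := by
    rcases hxv with h | h
    exacts [⟨_, Or.inl rfl, h⟩, ⟨_, Or.inr rfl, h⟩]
  obtain ⟨pb, hpbend, hvb⟩ : ∃ pb, (R.ini _ bc = pb ∨ R.fin _ bc = pb) ∧
      R.attach G ey pb = v := by
    rcases hyv with h | h
    exacts [⟨_, Or.inl rfl, h⟩, ⟨_, Or.inr rfl, h⟩]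
  obtain ⟨α, ha⟩ := endAt_exists hpaend
  obtain ⟨β, hb⟩ := endAt_exists hpbend
  have hp : TrackedPair R (G.col ex) (G.col ey) γ δ pa pb :=
    inv pa pb (hva.trans hvb.symm)
  have t : GlTrans R (.q1 (G.col ex) γ (G.col ey) δ)
      ((⟨some (G.col ex), ac⟩ : R.Alph), (⟨some (G.col ey), bc⟩ : R.Alph))
      (.q1 (R.col _ ac) α (R.col _ bc) β) :=
    .type2 _ _ _ _ ac bc hp ha hb
  have hlx : x (m + 1) = ⟨some (G.col ex), ac⟩ := Sigma.ext h1 (cast_heq _ _).symm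
  have hly : y (m + 1) = ⟨some (G.col ey), bc⟩ := Sigma.ext h2 (cast_heq _ _).symm
  rw [← hlx, ← hly] at t
  refine ⟨Function.update q (m + 2) (.q1 (R.col _ ac) α (R.col _ bc) β),
    ⟨?_, ?_⟩, ?_, α, β, ?_, ?_⟩
  · rw [Function.update_of_ne (by omega)]
    exact hq.1
  · intro l hl
    rcases Nat.lt_succ_iff_lt_or_eq.mp (Nat.lt_succ_of_le hl) with h | h
    · rw [Function.update_of_ne (by omega), Function.update_of_ne (by omega)]
      exact hq.2 l (Nat.lt_succ_iff.mp h)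
    · subst h
      rw [Function.update_of_ne (by omega), Function.update_self, hstate]
      exact t
  · rw [Function.update_of_ne (by omega), hstate]
    trivial
  · rw [Function.update_self, R.col_cast (x (m + 1)) _ h1, R.col_cast (y (m + 1)) _ h2]
  · rw [hEX, hEY]
    have hia := endAt_map (attach_inj (fullExp_loop R m) ex) ha
    have hib := endAt_map (attach_inj (fullExp_loop R m) ey) hb
    rw [hva] at hia
    rw [hvb] at hib
    refine AdjType.single ?_ hia hib
    rintro ⟨h0, hcase⟩
    have hne2 : R.ini _ ac ≠ R.fin _ ac := fun hh =>
      h0 (show (R.fullExp (m + 1)).ι ⟨ex, ac⟩ = (R.fullExp (m + 1)).τ ⟨ex, ac⟩ from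
        congrArg (R.attach G ex) hh)
    have hbd : (R.ini _ ac = R.bIni (G.col ex) ∨ R.ini _ ac = R.bFin (G.col ex)) ∧
        (R.fin _ ac = R.bIni (G.col ex) ∨ R.fin _ ac = R.bFin (G.col ex)) := by
      rcases hcase with ⟨e1, e2⟩ | ⟨e1, e2⟩ <;>
      · obtain ⟨v1, hb1, -⟩ := attach_eq_of_ne hneE e1
        obtain ⟨v2, hb2, -⟩ := attach_eq_of_ne hneE e2
        exact ⟨hb1.imp And.left And.left, hb2.imp And.left And.left⟩
    obtain ⟨hbIni, hbFin⟩ := hbd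
    have hnl : ¬ R.loopCol (G.col ex) := by
      intro hl
      have hbb := (R.bd_eq_iff _).2 hl
      rcases hbIni with h3 | h3 <;> rcases hbFin with h4 | h4
      · exact hne2 (h3.trans h4.symm)
      · exact hne2 (h3.trans (hbb.trans h4.symm))
      · exact hne2 (h3.trans (hbb.symm.trans h4.symm))
      · exact hne2 (h3.trans h4.symm)
    apply hR.no_bd_edge _ hnl ac
    rcases hbIni with h3 | h3 <;> rcases hbFin with h4 | h4
    · exact absurd (h3.trans h4.symm) hne2
    · exact Or.inl ⟨h3, h4⟩
    · exact Or.inr ⟨h3, h4⟩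
    · exact absurd (h3.trans h4.symm) hne2

end ERSPaper
end

section
/- Let R be an expanding edge replacement system and Gl_R its gluing automaton. Every Type 2 transition of Gl_R ends in a state q₁(i,α;j,β) with α,β ∈ {in,out,lp}; that is, the entries db⁺ and db⁻ can only appear in the target state of a Type 1 transition, never of a Type 2 transition. Moreover, when the source state q₁(i,γ;j,δ) has γ∈{db⁺} (or δ∈{db⁺,db⁻}), an edge a of Γ_i (respectively b of Γ_j) can be incident on at most one of the two boundary vertices ι_i, τ_i (respectively ι_j, τ_j), so the Type 2 transition rule is unambiguous. -/
/-!
In a Type 2 transition the new adjacency types are read off `EndAt`, which only produces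
`in`, `out` and `lp`. For unambiguity, the expanding condition forbids an edge of a non-loop
replacement graph to join `ι_c` and `τ_c`, so an edge incident on a boundary vertex touches
only one of them; the tracked vertex it meets is therefore determined by the edge, and so is
its adjacency type.
-/

namespace ERSPaper

namespace EndAt

variable {V : Type} {ia ta v : V} {α β : EType}

theorem incident (h : EndAt ia ta v α) : ia = v ∨ ta = v := by
  cases h <;> simp

theorem ne_dbp (h : EndAt ia ta v α) : α ≠ .dbp := by
  cases h <;> simp

theorem ne_dbm (h : EndAt ia ta v α) : α ≠ .dbm := by
  cases h <;> simp

theorem type_unique (h : EndAt ia ta v α) (h' : EndAt ia ta v β) : α = β := by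
  cases h <;> cases h' <;> simp_all

end EndAt

theorem TrackedPair.left_boundary_of_dbp {R : ERS} {i j : R.Col} {δ : EType}
    {u : R.V (some i)} {w : R.V (some j)} (hp : TrackedPair R i j .dbp δ u w) :
    u = R.bIni i ∨ u = R.bFin i := by
  cases hp with
  | nondb hu _ => simp [trackedV] at hu
  | _ => simp

theorem TrackedPair.right_boundary_of_dbp {R : ERS} {i j : R.Col} {δ : EType}
    {u : R.V (some i)} {w : R.V (some j)} (hp : TrackedPair R i j .dbp δ u w) :
    w = R.bIni j ∨ w = R.bFin j := by
  cases hp with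
  | nondb hu _ => simp [trackedV] at hu
  | _ => simp

namespace ERS.Expanding

variable {R : ERS} (hR : R.Expanding) {c : R.Col}
include hR

theorem not_incident_bIni_and_bFin (hne : R.bIni c ≠ R.bFin c) (e : R.E (some c)) :
    ¬ ((R.ini (some c) e = R.bIni c ∨ R.fin (some c) e = R.bIni c) ∧
       (R.ini (some c) e = R.bFin c ∨ R.fin (some c) e = R.bFin c)) := by
  have hnl : ¬ R.loopCol c := fun hl => hne ((R.bd_eq_iff c).mpr hl)
  rintro ⟨hini | hini, hfin | hfin⟩
  · exact hne (hini ▸ hfin)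
  · exact hR.no_bd_edge c hnl e (.inl ⟨hini, hfin⟩)
  · exact hR.no_bd_edge c hnl e (.inr ⟨hfin, hini⟩)
  · exact hne (hini ▸ hfin)

theorem boundary_eq_of_incident {e : R.E (some c)} {v v' : R.V (some c)}
    (hv : v = R.bIni c ∨ v = R.bFin c) (hv' : v' = R.bIni c ∨ v' = R.bFin c)
    (he : R.ini (some c) e = v ∨ R.fin (some c) e = v)
    (he' : R.ini (some c) e = v' ∨ R.fin (some c) e = v') : v = v' := by
  by_cases hne : R.bIni c = R.bFin c
  · rcases hv with rfl | rfl <;> rcases hv' with rfl | rfl <;> simp [hne]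
  · rcases hv with rfl | rfl <;> rcases hv' with rfl | rfl
    · rfl
    · exact absurd ⟨he, he'⟩ (hR.not_incident_bIni_and_bFin hne e)
    · exact absurd ⟨he', he⟩ (hR.not_incident_bIni_and_bFin hne e)
    · rfl

theorem endAt_boundary_type_unique {e : R.E (some c)} {v v' : R.V (some c)} {α α' : EType}
    (hv : v = R.bIni c ∨ v = R.bFin c) (hv' : v' = R.bIni c ∨ v' = R.bFin c)
    (h : EndAt (R.ini (some c) e) (R.fin (some c) e) v α)
    (h' : EndAt (R.ini (some c) e) (R.fin (some c) e) v' α') : α = α' := by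
  obtain rfl := hR.boundary_eq_of_incident hv hv' h.incident h'.incident
  exact h.type_unique h'

end ERS.Expanding

/-- Every Type 2 transition of `Gl_R` ends in a state
`q₁(i',α;j',β)` with `α, β ∈ {in, out, lp}`: the symbols `db⁺`, `db⁻` can only
appear in the target state of a Type 1 transition.  Moreover, when the source
state `q₁(i,γ;j,δ)` has `γ = db⁺` (or `δ ∈ {db⁺,db⁻}`), an edge of `Γ_i`
(respectively of `Γ_j`) can be incident on at most one of the two boundary
vertices `ι_i`, `τ_i` (respectively `ι_j`, `τ_j`) — this is what the second
conjunct states, for any color whose two boundary vertices are distinct — so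
the Type 2 transition rule out of a `db` state is unambiguous (third
conjunct: determinism). -/
theorem type2_targets_have_no_db (R : ERS) (hR : R.Expanding) :
    (∀ (i j : R.Col) (γ δ : EType) (p : R.Alph × R.Alph) (t : GlState R),
        GlTrans R (.q1 i γ j δ) p t →
          ∃ (i' j' : R.Col) (α β : EType),
            t = .q1 i' α j' β ∧
            α ≠ .dbp ∧ α ≠ .dbm ∧ β ≠ .dbp ∧ β ≠ .dbm) ∧
    (∀ c : R.Col, R.bIni c ≠ R.bFin c → ∀ e : R.E (some c),
        ¬ ((R.ini (some c) e = R.bIni c ∨ R.fin (some c) e = R.bIni c) ∧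
           (R.ini (some c) e = R.bFin c ∨ R.fin (some c) e = R.bFin c))) ∧
    (∀ (i j : R.Col) (δ : EType) (p : R.Alph × R.Alph) (t t' : GlState R),
        GlTrans R (.q1 i .dbp j δ) p t →
        GlTrans R (.q1 i .dbp j δ) p t' → t = t') := by
  refine ⟨?_, fun c hne e => hR.not_incident_bIni_and_bFin hne e, ?_⟩
  · rintro i j γ δ p t (_ | _ | ⟨_, _, _, _, _, _, _, ha, hb⟩)
    exact ⟨_, _, _, _, rfl, ha.ne_dbp, ha.ne_dbm, hb.ne_dbp, hb.ne_dbm⟩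
  · rintro i j δ p t t' (_ | _ | ⟨_, _, _, _, _, _, hp, ha, hb⟩)
      (_ | _ | ⟨_, _, _, _, _, _, hp', ha', hb'⟩)
    rw [hR.endAt_boundary_type_unique hp.left_boundary_of_dbp hp'.left_boundary_of_dbp ha ha',
      hR.endAt_boundary_type_unique hp.right_boundary_of_dbp hp'.right_boundary_of_dbp hb hb']
end ERSPaper
end

section
/- Let R be an expanding edge replacement system, let α,β ∈ Ω_R be glued sequences (α ∼ β) with α ≠ β, and let m be the minimal index such that α_m ≠ β_m. Then for every k ≥ m the edges α₀…α_k and β₀…β_k of the full expansion E_k are incident on a common vertex, and for every k > m this common vertex is unique. -/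
namespace ERSPaper

section Aux

variable {R : ERS}

lemma attach_cases {G : GraphData R} (e : G.E) (v : R.V (some (G.col e))) :
    R.attach G e v = Sum.inl (G.ι e) ∨ R.attach G e v = Sum.inl (G.τ e) ∨
      ∃ s, R.attach G e v = Sum.inr s ∧ s.1 = e := by
  unfold ERS.attach
  split_ifs with h1 h2
  · exact Or.inl rfl
  · exact Or.inr (Or.inl rfl)
  · exact Or.inr (Or.inr ⟨_, rfl, rfl⟩)

lemma attach_inl {G : GraphData R} {e : G.E} {w : R.V (some (G.col e))} {u : G.V}
    (h : R.attach G e w = Sum.inl u) :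
    (w = R.bIni (G.col e) ∧ u = G.ι e) ∨
      (w ≠ R.bIni (G.col e) ∧ w = R.bFin (G.col e) ∧ u = G.τ e) := by
  unfold ERS.attach at h
  split_ifs at h with h1 h2
  · exact Or.inl ⟨h1, (Sum.inl.inj h).symm⟩
  · exact Or.inr ⟨h1, h2, (Sum.inl.inj h).symm⟩

lemma incidentOn_expand {G : GraphData R} {p : (R.expandG G).E} {v : (R.expandG G).V}
    (h : (R.expandG G).IncidentOn p v) :
    (∃ u, v = Sum.inl u ∧ G.IncidentOn p.1 u) ∨ ∃ s, v = Sum.inr s ∧ s.1 = p.1 := by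
  rcases h with h | h
  · have h' : R.attach G p.1 (R.ini (some (G.col p.1)) p.2) = v := h
    rcases attach_cases (R := R) p.1 (R.ini (some (G.col p.1)) p.2) with hc | hc | ⟨s, hc, hs⟩
    · exact Or.inl ⟨_, h'.symm.trans hc, Or.inl rfl⟩
    · exact Or.inl ⟨_, h'.symm.trans hc, Or.inr rfl⟩
    · exact Or.inr ⟨s, h'.symm.trans hc, hs⟩
  · have h' : R.attach G p.1 (R.fin (some (G.col p.1)) p.2) = v := h
    rcases attach_cases (R := R) p.1 (R.fin (some (G.col p.1)) p.2) with hc | hc | ⟨s, hc, hs⟩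
    · exact Or.inl ⟨_, h'.symm.trans hc, Or.inl rfl⟩
    · exact Or.inl ⟨_, h'.symm.trans hc, Or.inr rfl⟩
    · exact Or.inr ⟨s, h'.symm.trans hc, hs⟩

/-- One-step descent: distinct-parent adjacent edges in the expansion have
adjacent parents. -/
lemma adj_descend {G : GraphData R} {p q : (R.expandG G).E}
    (hpq : p.1 ≠ q.1) (h : (R.expandG G).Adjacent p q) : G.Adjacent p.1 q.1 := by
  obtain ⟨v, hvp, hvq⟩ := h
  rcases incidentOn_expand hvp with ⟨u, huv, hu⟩ | ⟨s, hsv, hs⟩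
  · rcases incidentOn_expand hvq with ⟨u', huv', hu'⟩ | ⟨s', hsv', hs'⟩
    · obtain rfl : u = u' := by
        have := huv.symm.trans huv'
        exact Sum.inl.inj this
      exact ⟨u, hu, hu'⟩
    · rw [huv] at hsv'; exact absurd hsv' Sum.inl_ne_inr
  · rcases incidentOn_expand hvq with ⟨u', huv', hu'⟩ | ⟨s', hsv', hs'⟩
    · rw [hsv] at huv'; exact absurd huv' Sum.inr_ne_inl
    · obtain rfl : s = s' := Sum.inr.inj (hsv.symm.trans hsv')
      exact absurd (hs.symm.trans hs') hpq

/-- An edge of the expansion is incident on at most one old vertex. -/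
lemma inl_unique (hR : R.Expanding) {G : GraphData R} {p : (R.expandG G).E}
    {u1 u2 : G.V}
    (h1 : (R.expandG G).IncidentOn p (Sum.inl u1))
    (h2 : (R.expandG G).IncidentOn p (Sum.inl u2)) : u1 = u2 := by
  set c := G.col p.1 with hc
  set iv := R.ini (some c) p.2 with hiv
  set fv := R.fin (some c) p.2 with hfv
  have key : ∀ u : G.V, (R.expandG G).IncidentOn p (Sum.inl u) →
      (iv = R.bIni c ∧ u = G.ι p.1) ∨
      (iv ≠ R.bIni c ∧ iv = R.bFin c ∧ u = G.τ p.1) ∨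
      (fv = R.bIni c ∧ u = G.ι p.1) ∨
      (fv ≠ R.bIni c ∧ fv = R.bFin c ∧ u = G.τ p.1) := by
    intro u h
    rcases h with h | h
    · have h' : R.attach G p.1 iv = Sum.inl u := h
      rcases attach_inl h' with h'' | h''
      · exact Or.inl h''
      · exact Or.inr (Or.inl h'')
    · have h' : R.attach G p.1 fv = Sum.inl u := h
      rcases attach_inl h' with h'' | h''
      · exact Or.inr (Or.inr (Or.inl h''))
      · exact Or.inr (Or.inr (Or.inr h''))
  by_cases hl : R.loopCol c
  · -- loop color: the two boundary vertices coincide, so only `ι` appears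
    have hb : R.bIni c = R.bFin c := (R.bd_eq_iff c).mpr hl
    have key' : ∀ u : G.V, (R.expandG G).IncidentOn p (Sum.inl u) → u = G.ι p.1 := by
      intro u h
      rcases key u h with ⟨_, hu⟩ | ⟨hne', hbd, _⟩ | ⟨_, hu⟩ | ⟨hne', hbd, _⟩
      · exact hu
      · exact absurd (hbd.trans hb.symm) hne'
      · exact hu
      · exact absurd (hbd.trans hb.symm) hne'
    exact (key' u1 h1).trans (key' u2 h2).symm
  · -- non-loop color
    have hbd := hR.no_bd_edge c hl p.2
    rw [← hiv, ← hfv] at hbd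
    by_cases hnl : iv = fv
    · -- a loop edge in the replacement graph: both endpoints attach identically
      have key' : ∀ u : G.V, (R.expandG G).IncidentOn p (Sum.inl u) →
          R.attach G p.1 iv = Sum.inl u := by
        intro u h
        rcases h with h | h
        · exact h
        · have h' : R.attach G p.1 fv = Sum.inl u := h
          rw [hnl]; exact h'
      exact Sum.inl.inj ((key' u1 h1).symm.trans (key' u2 h2))
    · -- distinct endpoints: at most one of them is a boundary vertex
      have hnotboth : ¬((iv = R.bIni c ∨ iv = R.bFin c) ∧
          (fv = R.bIni c ∨ fv = R.bFin c)) := by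
        rintro ⟨hi | hi, hf | hf⟩
        · exact hnl (hi.trans hf.symm)
        · exact hbd (Or.inl ⟨hi, hf⟩)
        · exact hbd (Or.inr ⟨hi, hf⟩)
        · exact hnl (hi.trans hf.symm)
      rcases key u1 h1 with ⟨hi, hu1⟩ | ⟨hni, hi, hu1⟩ | ⟨hf, hu1⟩ | ⟨hnf, hf, hu1⟩ <;>
        rcases key u2 h2 with ⟨hi', hu2⟩ | ⟨hni', hi', hu2⟩ | ⟨hf', hu2⟩ | ⟨hnf', hf', hu2⟩ <;>
        first
          | exact hu1.trans hu2.symm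
          | tauto
          | exact absurd ⟨Or.inl (by assumption), Or.inl (by assumption)⟩ hnotboth
          | exact absurd ⟨Or.inl (by assumption), Or.inr (by assumption)⟩ hnotboth
          | exact absurd ⟨Or.inr (by assumption), Or.inl (by assumption)⟩ hnotboth
          | exact absurd ⟨Or.inr (by assumption), Or.inr (by assumption)⟩ hnotboth

/-- Distinct-parent edges of the expansion meet in at most one vertex. -/
lemma common_unique (hR : R.Expanding) {G : GraphData R} {p q : (R.expandG G).E}
    (hpq : p.1 ≠ q.1) {v1 v2 : (R.expandG G).V}
    (h1p : (R.expandG G).IncidentOn p v1) (h1q : (R.expandG G).IncidentOn q v1)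
    (h2p : (R.expandG G).IncidentOn p v2) (h2q : (R.expandG G).IncidentOn q v2) :
    v1 = v2 := by
  have inlify : ∀ v : (R.expandG G).V, (R.expandG G).IncidentOn p v →
      (R.expandG G).IncidentOn q v → ∃ u, v = Sum.inl u := by
    intro v hp hq
    rcases incidentOn_expand hp with ⟨u, huv, _⟩ | ⟨s, hsv, hs⟩
    · exact ⟨u, huv⟩
    · rcases incidentOn_expand hq with ⟨u', huv', _⟩ | ⟨s', hsv', hs'⟩
      · exact ⟨u', huv'⟩
      · obtain rfl : s = s' := Sum.inr.inj (hsv.symm.trans hsv')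
        exact absurd (hs.symm.trans hs') hpq
  obtain ⟨u1, rfl⟩ := inlify v1 h1p h1q
  obtain ⟨u2, rfl⟩ := inlify v2 h2p h2q
  exact congrArg Sum.inl (inl_unique hR h1p h2p)

lemma wordEdge_heq_succ (x : ℕ → R.Alph) (k : ℕ) (h : R.IsWalkUpTo x (k + 1)) :
    HEq ((R.wordEdge x (k + 1) h).1.2) (x (k + 1)).2 := cast_heq _ _

lemma wordEdge_heq_zero (x : ℕ → R.Alph) (h : R.IsWalkUpTo x 0) :
    HEq ((R.wordEdge x 0 h).1) (x 0).2 := cast_heq _ _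

/-- For `k ≥ m` the two word edges are distinct. -/
lemma wordEdge_ne (x y : ℕ → R.Alph) (hx : R.IsWalk x) (hy : R.IsWalk y)
    (m : ℕ) (hne : x m ≠ y m) (hmin : ∀ l < m, x l = y l) :
    ∀ k, m ≤ k → (R.wordEdge x k (hx.upTo k)).1 ≠ (R.wordEdge y k (hy.upTo k)).1 := by
  intro k hk
  induction k, hk using Nat.le_induction with
  | base =>
    intro h
    apply hne
    match m, hne, hmin, h with
    | 0, hne, hmin, h =>
      have hfst : (x 0).1 = (y 0).1 := hx.1.trans hy.1.symm
      have hax := wordEdge_heq_zero (R := R) x (hx.upTo 0)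
      have hay := wordEdge_heq_zero (R := R) y (hy.upTo 0)
      rw [← h] at hay
      exact Sigma.ext hfst (hax.symm.trans hay)
    | m' + 1, hne, hmin, h =>
      have hxy : x m' = y m' := hmin m' (Nat.lt_succ_self m')
      have hfst : (x (m' + 1)).1 = (y (m' + 1)).1 := by
        rw [hx.2 m', hy.2 m', hxy]
      have hax := wordEdge_heq_succ (R := R) x m' (hx.upTo (m' + 1))
      have hay := wordEdge_heq_succ (R := R) y m' (hy.upTo (m' + 1))
      rw [← h] at hay
      exact Sigma.ext hfst (hax.symm.trans hay)
  | succ k hmk ih =>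
    intro h
    exact ih (congrArg Sigma.fst h)

end Aux

/-- Let `α, β ∈ Ω_R` be glued sequences with `α ≠ β`, and
let `m` be the minimal index with `α_m ≠ β_m`.  Then for every `k ≥ m` the
edges `α₀…α_k` and `β₀…β_k` of the full expansion `E_k` are incident on a
common vertex, and for every `k > m` this common vertex is unique. -/
theorem glued_common_vertex (R : ERS) (hR : R.Expanding)
    (x y : ℕ → R.Alph) (hx : R.IsWalk x) (hy : R.IsWalk y)
    (hglue : R.Glued x y hx hy) (m : ℕ)
    (hne : x m ≠ y m) (hmin : ∀ l < m, x l = y l) :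
    (∀ k : ℕ, m ≤ k →
      ∃ v : (R.fullExp k).V,
        (R.fullExp k).IncidentOn (R.wordEdge x k (hx.upTo k)).1 v ∧
        (R.fullExp k).IncidentOn (R.wordEdge y k (hy.upTo k)).1 v) ∧
    (∀ k : ℕ, m < k →
      ∃! v : (R.fullExp k).V,
        (R.fullExp k).IncidentOn (R.wordEdge x k (hx.upTo k)).1 v ∧
        (R.fullExp k).IncidentOn (R.wordEdge y k (hy.upTo k)).1 v) := by
  have hNE : ∀ k, m ≤ k →
      (R.wordEdge x k (hx.upTo k)).1 ≠ (R.wordEdge y k (hy.upTo k)).1 :=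
    wordEdge_ne x y hx hy m hne hmin
  have hADJ : ∀ k, m ≤ k →
      (R.fullExp k).Adjacent (R.wordEdge x k (hx.upTo k)).1
        (R.wordEdge y k (hy.upTo k)).1 := by
    obtain ⟨N, hN⟩ := hglue
    have step : ∀ j k, m ≤ k →
        (R.fullExp (k + j)).Adjacent (R.wordEdge x (k + j) (hx.upTo (k + j))).1
          (R.wordEdge y (k + j) (hy.upTo (k + j))).1 →
        (R.fullExp k).Adjacent (R.wordEdge x k (hx.upTo k)).1
          (R.wordEdge y k (hy.upTo k)).1 := by
      intro j
      induction j with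
      | zero => intro k _ h; exact h
      | succ j ih =>
        intro k hk h
        have hrw : k + (j + 1) = (k + 1) + j := by omega
        rw [hrw] at h
        have hk1 := ih (k + 1) (Nat.le_succ_of_le hk) h
        exact adj_descend (hNE k hk) hk1
    intro k hk
    have hn := hN (max N k) (le_max_left _ _)
    have hkk : k + (max N k - k) = max N k := by omega
    exact step (max N k - k) k hk (by rw [hkk]; exact hn)
  refine ⟨fun k hk => hADJ k hk, ?_⟩
  intro k hk
  obtain ⟨k', rfl⟩ : ∃ k', k = k' + 1 := ⟨k - 1, by omega⟩
  have hk' : m ≤ k' := by omega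
  obtain ⟨v, hv1, hv2⟩ := hADJ (k' + 1) (by omega)
  exact ⟨v, ⟨hv1, hv2⟩, fun v' hv' =>
    common_unique hR (hNE k' hk') hv'.1 hv'.2 hv1 hv2⟩

end ERSPaper
end
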